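/- arXiv:2312.08293 — 3 statements merged into one kernel-verified Lean document; each statement's English description precedes it below -/
import Mathlib

section
/- The sigmoid function φ(ν) = 1/(1 + e^{−ν}) satisfies the offset sector [0, 1/4] around the point (ν*, φ(ν*)) = (0, 1/2): for all ν ∈ ℝ, ((1/2 − φ(ν)) − 0·(0 − ν))·((1/4)(0 − ν) − (1/2 − φ(ν))) ≥ 0. -/
/-!
The sigmoid is increasing with derivative `σ (1 - σ) ≤ 1/4`, hence `1/4`-Lipschitz, and an
increasing `L`-Lipschitz function lies in the offset sector `[0, L]` around each of its points:
its increments `d` over steps `h` satisfy `d h ≥ 0` and `d² ≤ L d h`.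
-/

open Real NNReal

def SatisfiesOffsetSector (φ : ℝ → ℝ) (α β ν₀ : ℝ) : Prop :=
  ∀ ν, 0 ≤ ((φ ν₀ - φ ν) - α * (ν₀ - ν)) * (β * (ν₀ - ν) - (φ ν₀ - φ ν))

theorem Monotone.satisfiesOffsetSector {f : ℝ → ℝ} {L : ℝ≥0} (hmono : Monotone f)
    (hlip : LipschitzWith L f) (ν₀ : ℝ) : SatisfiesOffsetSector f 0 L ν₀ := by
  intro ν
  set d := f ν₀ - f ν
  set h := ν₀ - ν
  have hsign : 0 ≤ d * h := by
    rcases le_total ν ν₀ with hν | hν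
    · exact mul_nonneg (sub_nonneg.2 (hmono hν)) (sub_nonneg.2 hν)
    · exact mul_nonneg_of_nonpos_of_nonpos (sub_nonpos.2 (hmono hν)) (sub_nonpos.2 hν)
  have hbound : |d| ≤ L * |h| := by
    simpa only [Real.dist_eq] using hlip.dist_le_mul ν₀ ν
  have hsq : d * d ≤ L * (d * h) :=
    calc d * d = |d| * |d| := (abs_mul_abs_self d).symm
      _ ≤ |d| * (L * |h|) := mul_le_mul_of_nonneg_left hbound (abs_nonneg d)
      _ = L * |d * h| := by rw [abs_mul]; ring
      _ = L * (d * h) := by rw [abs_of_nonneg hsign]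
  calc 0 ≤ L * (d * h) - d * d := sub_nonneg.2 hsq
    _ = (d - 0 * h) * (L * h - d) := by ring

theorem sigmoid_mul_one_sub_sigmoid_le (x : ℝ) : sigmoid x * (1 - sigmoid x) ≤ 4⁻¹ := by
  nlinarith [sq_nonneg (sigmoid x - 2⁻¹)]

theorem lipschitzWith_sigmoid : LipschitzWith 4⁻¹ sigmoid := by
  refine lipschitzWith_of_nnnorm_deriv_le differentiable_sigmoid fun x => ?_
  rw [deriv_sigmoid, ← NNReal.coe_le_coe, coe_nnnorm, Real.norm_of_nonneg
    (mul_nonneg (sigmoid_nonneg x) (sub_nonneg.2 (sigmoid_le_one x)))]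
  exact_mod_cast sigmoid_mul_one_sub_sigmoid_le x

theorem sigmoid_offset_sector :
    ∀ ν : ℝ,
      ((1 / 2 - 1 / (1 + Real.exp (-ν))) - 0 * (0 - ν)) *
        ((1 / 4) * (0 - ν) - (1 / 2 - 1 / (1 + Real.exp (-ν)))) ≥ 0 := by
  intro ν
  have hsector := sigmoid_monotone.satisfiesOffsetSector lipschitzWith_sigmoid 0 ν
  norm_num [sigmoid_zero, sigmoid_def] at hsector ⊢
  exact hsector
end

section
/- Let P ≻ 0 be symmetric n×n, Λ ≻ 0 diagonal m×m, A_cl ∈ ℝ^{n×n}, B_cl ∈ ℝ^{n×m}, N ∈ ℝ^{m×n}, L ∈ ℝ^{m×m}. The block matrix [[P, 0, A_clᵀ, Nᵀ],[0, Λ, B_clᵀ, Lᵀ],[A_cl, B_cl, P⁻¹, 0],[N, L, 0, Λ⁻¹]] is positive definite if and only if [[A_clᵀPA_cl − P, A_clᵀPB_cl],[B_clᵀPA_cl, B_clᵀPB_cl]] + [[NᵀΛN, NᵀΛL],[LᵀΛN, LᵀΛL]] − [[0,0],[0,Λ]] ≺ 0. -/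
/-!
The large matrix is `[[M, B], [Bᴴ, D]]` with `M = diag(P, Λ)`, `B = [[Aclᵀ, Nᵀ], [Bclᵀ, Lᵀ]]` and
`D = diag(P⁻¹, Λ⁻¹) ≻ 0`. By the Schur complement it is positive definite iff
`M - B D⁻¹ Bᴴ ≻ 0`, and since `D⁻¹ = M` this complement is exactly the negated left-hand side of
the LMI. The Schur complement lemma itself follows from the congruence
`[[A, B], [Bᴴ, D]] = U diag(A - B D⁻¹ Bᴴ, D) Uᴴ` with the unitriangular `U = [[1, B D⁻¹], [0, 1]]`.
-/

open Matrix

namespace Matrix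

variable {m n : Type*} [Fintype m] [Fintype n]

theorem posDef_fromBlocks_zero_zero_iff {R : Type*} [CommRing R] [PartialOrder R] [StarRing R]
    [StarOrderedRing R] {A : Matrix m m R} {D : Matrix n n R} :
    (fromBlocks A 0 0 D).PosDef ↔ A.PosDef ∧ D.PosDef := by
  refine ⟨fun h => ⟨h.submatrix Sum.inl_injective, h.submatrix Sum.inr_injective⟩,
    fun ⟨hA, hD⟩ => .of_dotProduct_mulVec_pos ?_ fun x hx => ?_⟩
  · simp [IsHermitian, fromBlocks_conjTranspose, hA.1.eq, hD.1.eq]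
  rw [← Sum.elim_comp_inl_inr x, fromBlocks_mulVec, Function.star_sumElim,
    sumElim_dotProduct_sumElim]
  simp only [zero_mulVec, add_zero, zero_add]
  by_cases hx₁ : x ∘ Sum.inl = 0
  · have hx₂ : x ∘ Sum.inr ≠ 0 := fun hx₂ => hx <| by
      rw [← Sum.elim_comp_inl_inr x, hx₁, hx₂]
      ext (i | i) <;> rfl
    exact add_pos_of_nonneg_of_pos (hA.posSemidef.dotProduct_mulVec_nonneg _)
      (hD.dotProduct_mulVec_pos hx₂)
  · exact add_pos_of_pos_of_nonneg (hA.dotProduct_mulVec_pos hx₁)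
      (hD.posSemidef.dotProduct_mulVec_nonneg _)

theorem posDef_fromBlocks₂₂_iff {K : Type*} [Field K] [PartialOrder K] [StarRing K]
    [StarOrderedRing K] [DecidableEq m] [DecidableEq n] (A : Matrix m m K) (B : Matrix m n K)
    {D : Matrix n n K} (hD : D.PosDef) :
    (fromBlocks A B Bᴴ D).PosDef ↔ (A - B * D⁻¹ * Bᴴ).PosDef := by
  set U : Matrix (m ⊕ n) (m ⊕ n) K := fromBlocks 1 (B * D⁻¹) 0 1
  have hU : IsUnit U := by simp [U]
  have hdet : IsUnit D.det := (isUnit_iff_isUnit_det D).1 hD.isUnit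
  have hcongr : fromBlocks A B Bᴴ D = U * fromBlocks (A - B * D⁻¹ * Bᴴ) 0 0 D * star U := by
    simp [U, fromBlocks_multiply, star_eq_conjTranspose, fromBlocks_conjTranspose,
      conjTranspose_nonsing_inv, hD.1.eq, Matrix.mul_assoc, nonsing_inv_mul _ hdet,
      mul_nonsing_inv_cancel_left _ _ hdet]
  rw [hcongr, hU.posDef_star_right_conjugate_iff, posDef_fromBlocks_zero_zero_iff,
    and_iff_left hD]

end Matrix

theorem schur_equivalence_stability_LMI_general
    {n m : ℕ}
    (P : Matrix (Fin n) (Fin n) ℝ) (Λ : Matrix (Fin m) (Fin m) ℝ)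
    (Acl : Matrix (Fin n) (Fin n) ℝ) (Bcl : Matrix (Fin n) (Fin m) ℝ)
    (N : Matrix (Fin m) (Fin n) ℝ) (L : Matrix (Fin m) (Fin m) ℝ)
    (hP : P.PosDef) (hΛ : Λ.PosDef) :
    (Matrix.fromBlocks
        (Matrix.fromBlocks P 0 0 Λ)
        (Matrix.fromBlocks Aclᵀ Nᵀ Bclᵀ Lᵀ)
        (Matrix.fromBlocks Acl Bcl N L)
        (Matrix.fromBlocks P⁻¹ 0 0 Λ⁻¹)).PosDef ↔
    (-(Matrix.fromBlocks (Aclᵀ * P * Acl - P) (Aclᵀ * P * Bcl)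
          (Bclᵀ * P * Acl) (Bclᵀ * P * Bcl) +
        Matrix.fromBlocks (Nᵀ * Λ * N) (Nᵀ * Λ * L) (Lᵀ * Λ * N) (Lᵀ * Λ * L) -
        Matrix.fromBlocks 0 0 0 Λ)).PosDef := by
  have hC : fromBlocks Acl Bcl N L = (fromBlocks Aclᵀ Nᵀ Bclᵀ Lᵀ)ᴴ := by
    simp [conjTranspose_eq_transpose_of_trivial, fromBlocks_transpose]
  have hD : (fromBlocks P⁻¹ 0 0 Λ⁻¹).PosDef :=
    posDef_fromBlocks_zero_zero_iff.2 ⟨hP.inv, hΛ.inv⟩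
  have hD_inv : (fromBlocks P⁻¹ 0 0 Λ⁻¹)⁻¹ = fromBlocks P 0 0 Λ := by
    rw [inv_fromBlocks_zero₂₁_of_isUnit_iff _ _ _ (iff_of_true hP.inv.isUnit hΛ.inv.isUnit),
      nonsing_inv_nonsing_inv _ ((isUnit_iff_isUnit_det _).1 hP.isUnit),
      nonsing_inv_nonsing_inv _ ((isUnit_iff_isUnit_det _).1 hΛ.isUnit)]
    simp
  rw [hC, posDef_fromBlocks₂₂_iff _ _ hD, hD_inv, ← hC]
  congr! 1
  simp only [sub_eq_add_neg, fromBlocks_multiply, fromBlocks_add, fromBlocks_neg, Matrix.mul_zero,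
    add_zero, zero_add, neg_zero, neg_add_rev, neg_neg]
  congr 1
  abel

theorem schur_equivalence_stability_LMI
    {n m : ℕ}
    (P : Matrix (Fin n) (Fin n) ℝ) (Λ : Matrix (Fin m) (Fin m) ℝ)
    (Acl : Matrix (Fin n) (Fin n) ℝ) (Bcl : Matrix (Fin n) (Fin m) ℝ)
    (N : Matrix (Fin m) (Fin n) ℝ) (L : Matrix (Fin m) (Fin m) ℝ)
    (hP : P.PosDef) (hΛ : Λ.PosDef)
    (hΛdiag : ∃ dvec : Fin m → ℝ, Λ = Matrix.diagonal dvec) :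
    (Matrix.fromBlocks
        (Matrix.fromBlocks P 0 0 Λ)
        (Matrix.fromBlocks Aclᵀ Nᵀ Bclᵀ Lᵀ)
        (Matrix.fromBlocks Acl Bcl N L)
        (Matrix.fromBlocks P⁻¹ 0 0 Λ⁻¹)).PosDef ↔
    (-(Matrix.fromBlocks (Aclᵀ * P * Acl - P) (Aclᵀ * P * Bcl)
          (Bclᵀ * P * Acl) (Bclᵀ * P * Bcl) +
        Matrix.fromBlocks (Nᵀ * Λ * N) (Nᵀ * Λ * L) (Lᵀ * Λ * N) (Lᵀ * Λ * L) -
        Matrix.fromBlocks 0 0 0 Λ)).PosDef :=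
  schur_equivalence_stability_LMI_general P Λ Acl Bcl N L hP hΛ
end

section
/- Suppose there exists a symmetric positive definite P ∈ ℝ^{n×n}, a diagonal Λ ⪰ 0, and the matrix inequality R_Vᵀ [[AᵀPA − P, AᵀPB],[BᵀPA, BᵀPB]] R_V + R_φᵀ [[Λ, 0],[0, −Λ]] R_φ ≺ 0 holds, where R_V = [[I, 0],[N_ux, N_uz]], R_φ = [[N_vx, N_vz],[0, I]]. Then for every x and z satisfying the normalized sector condition vᵀΛv − zᵀΛz ≥ 0 with v = N_vx x + N_vz z, the state update x⁺ = A x + B(N_ux x + N_uz z) satisfies x⁺ᵀ P x⁺ < xᵀ P x whenever (x, z) ≠ 0. -/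
/-!
Evaluate the LMI at `w = (x, z)`. Since `R_V w = (x, u)` and `R_φ w = (v, z)`, the first term
of the quadratic form is `V(x⁺) - V(x)` and the second is the sector quantity
`vᵀΛv - zᵀΛz ≥ 0`; their sum is negative because `w ≠ 0`.
-/

open Matrix

section CommSemiring

variable {α ι ι' κ κ' μ : Type*} [CommSemiring α]
  [Fintype ι] [Fintype ι'] [Fintype κ] [Fintype κ']

theorem dotProduct_transpose_mul_mul_mulVec (R : Matrix ι κ α) (M : Matrix ι ι' α)
    (S : Matrix ι' κ' α) (v : κ → α) (w : κ' → α) :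
    v ⬝ᵥ (Rᵀ * M * S) *ᵥ w = (R *ᵥ v) ⬝ᵥ M *ᵥ (S *ᵥ w) := by
  rw [← mulVec_mulVec, ← mulVec_mulVec, dotProduct_mulVec, vecMul_transpose]

theorem sumElim_dotProduct_fromBlocks_mulVec_sumElim (E : Matrix ι ι α) (F : Matrix ι κ α)
    (G : Matrix κ ι α) (H : Matrix κ κ α) (p : ι → α) (q : κ → α) :
    Sum.elim p q ⬝ᵥ fromBlocks E F G H *ᵥ Sum.elim p q
      = p ⬝ᵥ E *ᵥ p + p ⬝ᵥ F *ᵥ q + q ⬝ᵥ G *ᵥ p + q ⬝ᵥ H *ᵥ q := by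
  rw [fromBlocks_mulVec, Sum.elim_comp_inl, Sum.elim_comp_inr, sumElim_dotProduct_sumElim,
    dotProduct_add, dotProduct_add]
  ring

theorem fromBlocks_one_zero_mulVec_sumElim [DecidableEq ι] (C : Matrix μ ι α)
    (D : Matrix μ κ α) (x : ι → α) (z : κ → α) :
    fromBlocks 1 0 C D *ᵥ Sum.elim x z = Sum.elim x (C *ᵥ x + D *ᵥ z) := by
  simp [fromBlocks_mulVec]

theorem fromBlocks_zero_one_mulVec_sumElim [DecidableEq κ] (C : Matrix μ ι α)
    (D : Matrix μ κ α) (x : ι → α) (z : κ → α) :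
    fromBlocks C D 0 1 *ᵥ Sum.elim x z = Sum.elim (C *ᵥ x + D *ᵥ z) z := by
  simp [fromBlocks_mulVec]

end CommSemiring

section CommRing

variable {α ι κ : Type*} [CommRing α] [Fintype ι] [Fintype κ]

theorem sumElim_dotProduct_lyapunovBlock_mulVec_sumElim (P A : Matrix ι ι α)
    (B : Matrix ι κ α) (x : ι → α) (u : κ → α) :
    Sum.elim x u ⬝ᵥ
        fromBlocks (Aᵀ * P * A - P) (Aᵀ * P * B) (Bᵀ * P * A) (Bᵀ * P * B) *ᵥ Sum.elim x u
      = (A *ᵥ x + B *ᵥ u) ⬝ᵥ P *ᵥ (A *ᵥ x + B *ᵥ u) - x ⬝ᵥ P *ᵥ x := by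
  rw [sumElim_dotProduct_fromBlocks_mulVec_sumElim, sub_mulVec, dotProduct_sub]
  simp only [dotProduct_transpose_mul_mul_mulVec, mulVec_add, dotProduct_add, add_dotProduct]
  ring

theorem sumElim_dotProduct_sectorBlock_mulVec_sumElim (Λ : Matrix κ κ α) (v z : κ → α) :
    Sum.elim v z ⬝ᵥ fromBlocks Λ 0 0 (-Λ) *ᵥ Sum.elim v z = v ⬝ᵥ Λ *ᵥ v - z ⬝ᵥ Λ *ᵥ z := by
  simp [sumElim_dotProduct_fromBlocks_mulVec_sumElim, neg_mulVec, sub_eq_add_neg]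

end CommRing

theorem lyapunov_decrease_nn_system_general
    {n nu m : ℕ}
    (P : Matrix (Fin n) (Fin n) ℝ) (Λ : Matrix (Fin m) (Fin m) ℝ)
    (A : Matrix (Fin n) (Fin n) ℝ) (B : Matrix (Fin n) (Fin nu) ℝ)
    (Nux : Matrix (Fin nu) (Fin n) ℝ) (Nuz : Matrix (Fin nu) (Fin m) ℝ)
    (Nvx : Matrix (Fin m) (Fin n) ℝ) (Nvz : Matrix (Fin m) (Fin m) ℝ)
    (RV : Matrix (Fin n ⊕ Fin nu) (Fin n ⊕ Fin m) ℝ)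
    (Rφ : Matrix (Fin m ⊕ Fin m) (Fin n ⊕ Fin m) ℝ)
    (hRV : RV = Matrix.fromBlocks 1 0 Nux Nuz)
    (hRφ : Rφ = Matrix.fromBlocks Nvx Nvz 0 1)
    (hLMI : (-(RVᵀ *
        Matrix.fromBlocks (Aᵀ * P * A - P) (Aᵀ * P * B) (Bᵀ * P * A) (Bᵀ * P * B) * RV +
        Rφᵀ * Matrix.fromBlocks Λ 0 0 (-Λ) * Rφ)).PosDef) :
    ∀ (x : Fin n → ℝ) (z : Fin m → ℝ),
      (Nvx.mulVec x + Nvz.mulVec z) ⬝ᵥ Λ.mulVec (Nvx.mulVec x + Nvz.mulVec z) -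
          z ⬝ᵥ Λ.mulVec z ≥ 0 →
      ¬(x = 0 ∧ z = 0) →
      (A.mulVec x + B.mulVec (Nux.mulVec x + Nuz.mulVec z)) ⬝ᵥ
          P.mulVec (A.mulVec x + B.mulVec (Nux.mulVec x + Nuz.mulVec z)) <
        x ⬝ᵥ P.mulVec x := by
  intro x z hsector hxz
  have hw : Sum.elim x z ≠ 0 := by
    rwa [← Sum.elim_zero_zero, Ne, Sum.elim_eq_iff]
  have hLMI_w := hLMI.dotProduct_mulVec_pos hw
  simp only [star_trivial, neg_mulVec, dotProduct_neg, add_mulVec, dotProduct_add,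
    dotProduct_transpose_mul_mul_mulVec, hRV, hRφ, fromBlocks_one_zero_mulVec_sumElim,
    fromBlocks_zero_one_mulVec_sumElim, sumElim_dotProduct_lyapunovBlock_mulVec_sumElim,
    sumElim_dotProduct_sectorBlock_mulVec_sumElim] at hLMI_w
  linarith

theorem lyapunov_decrease_nn_system
    {n nu m : ℕ}
    (P : Matrix (Fin n) (Fin n) ℝ) (Λ : Matrix (Fin m) (Fin m) ℝ)
    (A : Matrix (Fin n) (Fin n) ℝ) (B : Matrix (Fin n) (Fin nu) ℝ)
    (Nux : Matrix (Fin nu) (Fin n) ℝ) (Nuz : Matrix (Fin nu) (Fin m) ℝ)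
    (Nvx : Matrix (Fin m) (Fin n) ℝ) (Nvz : Matrix (Fin m) (Fin m) ℝ)
    (hP : P.PosDef)
    (hΛdiag : ∃ dvec : Fin m → ℝ, Λ = Matrix.diagonal dvec)
    (hΛ : Λ.PosSemidef)
    (RV : Matrix (Fin n ⊕ Fin nu) (Fin n ⊕ Fin m) ℝ)
    (Rφ : Matrix (Fin m ⊕ Fin m) (Fin n ⊕ Fin m) ℝ)
    (hRV : RV = Matrix.fromBlocks 1 0 Nux Nuz)
    (hRφ : Rφ = Matrix.fromBlocks Nvx Nvz 0 1)
    (hLMI : (-(RVᵀ *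
        Matrix.fromBlocks (Aᵀ * P * A - P) (Aᵀ * P * B) (Bᵀ * P * A) (Bᵀ * P * B) * RV +
        Rφᵀ * Matrix.fromBlocks Λ 0 0 (-Λ) * Rφ)).PosDef) :
    ∀ (x : Fin n → ℝ) (z : Fin m → ℝ),
      (Nvx.mulVec x + Nvz.mulVec z) ⬝ᵥ Λ.mulVec (Nvx.mulVec x + Nvz.mulVec z) -
          z ⬝ᵥ Λ.mulVec z ≥ 0 →
      ¬(x = 0 ∧ z = 0) →
      (A.mulVec x + B.mulVec (Nux.mulVec x + Nuz.mulVec z)) ⬝ᵥ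
          P.mulVec (A.mulVec x + B.mulVec (Nux.mulVec x + Nuz.mulVec z)) <
        x ⬝ᵥ P.mulVec x :=
  lyapunov_decrease_nn_system_general P Λ A B Nux Nuz Nvx Nvz RV Rφ hRV hRφ hLMI
end
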